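/- Consider a linear finite-field deterministic network with nodes {1,…,N} observing the common-bits correlated source (U_1,…,U_N) and a single destination d. If the vector source (U_1,…,U_N) is transmissible to d, then H(U_S | U_{S^c}) ≤ rank(G_{S,S^c}) (entropy in bits, rank over F_2) for every subset S ⊆ {1,…,N}. (Necessity part of Theorem 2.) -/
import Mathlib


open Filter Topology

/-- The `q × q` down-shift matrix over `𝔽₂`: entry `(k, ℓ)` is `1` iff `k = ℓ + 1`. -/
def downShift (q : ℕ) : Matrix (Fin q) (Fin q) (ZMod 2) :=
  Matrix.of fun k l => if (k : ℕ) = (l : ℕ) + 1 then 1 else 0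

/-- A linear finite-field deterministic network with source nodes `1,…,N` (modeled as `Fin N`)
and a single destination `d` (modeled as `none : Option (Fin N)`).  Every edge `(i,j)` carries
an integer level `n i j ≤ q`, and the underlying directed graph is acyclic (it admits a
topological ordering). -/
structure LFFDNet (N q : ℕ) where
  E : Finset (Fin N × Option (Fin N))
  n : Fin N → Option (Fin N) → ℕ
  hq : 1 ≤ q
  hn : ∀ e ∈ E, n e.1 e.2 ≤ q
  acyclic : ∃ ρ : Option (Fin N) → ℕ, ∀ e ∈ E, ρ (some e.1) < ρ e.2

/-- The channel matrix of the link from node `i` to node `j`: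
`S^(q - n i j)` if `(i,j)` is an edge, and `0` otherwise. -/
def linkMat {N q : ℕ} (net : LFFDNet N q) (i : Fin N) (j : Option (Fin N)) :
    Matrix (Fin q) (Fin q) (ZMod 2) :=
  if (i, j) ∈ net.E then downShift q ^ (q - net.n i j) else 0

/-- The cut transfer matrix `G_{S,Sᶜ}` of a cut `S ⊆ {1,…,N}`: the block matrix whose
`(j, i)` block (for `j ∈ Sᶜ` — which always contains the destination — and `i ∈ S`)
is the channel matrix of the link from `i` to `j`. -/
def cutMatrix {N q : ℕ} (net : LFFDNet N q) (S : Finset (Fin N)) :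
    Matrix ((↥((S.image some)ᶜ)) × Fin q) ((↥S) × Fin q) (ZMod 2) :=
  Matrix.of fun jr ic => linkMat net ic.1.1 jr.1.1 jr.2 ic.2

/-- The Shannon entropy (in natural-logarithm units; bits correspond to multiples of
`Real.log 2`) of a function `X` of a uniformly distributed random vector of `n₀`
i.i.d. unbiased bits. -/
noncomputable def entropyOfUniform {n₀ : ℕ} {α : Type*} [Fintype α] [DecidableEq α]
    (X : (Fin n₀ → ZMod 2) → α) : ℝ :=
  ∑ a : α, Real.negMulLog
    (((Finset.univ.filter fun v : Fin n₀ → ZMod 2 => X v = a).card : ℝ) /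
      (Fintype.card (Fin n₀ → ZMod 2) : ℝ))

/-- Conditional Shannon entropy `H(X | Y) = H(X, Y) - H(Y)` for functions of a uniformly
distributed random vector of `n₀` i.i.d. unbiased bits. -/
noncomputable def condEntropyOfUniform {n₀ : ℕ} {α β : Type*} [Fintype α] [Fintype β]
    [DecidableEq α] [DecidableEq β]
    (X : (Fin n₀ → ZMod 2) → α) (Y : (Fin n₀ → ZMod 2) → β) : ℝ :=
  entropyOfUniform (fun v => (X v, Y v)) - entropyOfUniform Y

/-- The common-bits source: node `i` observes `U_i`, the restriction of the uniform bit
vector `V ∈ 𝔽₂^{n₀}` to the coordinate set `𝒰 i`.  `sourceTuple 𝒰 S` is the tuple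
`U_S = (U_i)_{i ∈ S}` as a function of `V`. -/
def sourceTuple {n₀ N : ℕ} (𝒰 : Fin N → Finset (Fin n₀)) (S : Finset (Fin N)) :
    (Fin n₀ → ZMod 2) → ((i : ↥S) → (↥(𝒰 i.1) → ZMod 2)) :=
  fun v i ℓ => v ℓ.1

/-- A transmission scheme with block length `T` for the common-bits source: node `i`
observes a block of `T` source symbols `u_i[1..T]` and transmits at each time `t` a
function of its source block and of its received signals at times `< t` (strict causality
in the channel); the destination maps its `T` received signals to estimates of all the
source blocks. -/
structure SourceScheme {N q : ℕ} (net : LFFDNet N q) {n₀ : ℕ}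
    (𝒰 : Fin N → Finset (Fin n₀)) (T : ℕ) where
  enc : (i : Fin N) → (t : Fin T) → (Fin T → ↥(𝒰 i) → ZMod 2) →
      ((s : Fin (t : ℕ)) → Fin q → ZMod 2) → (Fin q → ZMod 2)
  dec : (Fin T → Fin q → ZMod 2) → ((i : Fin N) → Fin T → ↥(𝒰 i) → ZMod 2)

/-- The source block observed by node `i` when the realization of the `T` i.i.d. copies
of the bit vector `V` is `v`. -/
def sourceBlock {n₀ N : ℕ} (𝒰 : Fin N → Finset (Fin n₀)) {T : ℕ}
    (v : Fin T → Fin n₀ → ZMod 2) (i : Fin N) : Fin T → ↥(𝒰 i) → ZMod 2 :=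
  fun t ℓ => v t ℓ.1

/-- The signal transmitted by node `i` at time `t`, determined by the source realization
`v`, the encoders, and the network equations. -/
noncomputable def transmitSrc {N q : ℕ} (net : LFFDNet N q) {n₀ : ℕ}
    {𝒰 : Fin N → Finset (Fin n₀)} {T : ℕ} (C : SourceScheme net 𝒰 T)
    (v : Fin T → Fin n₀ → ZMod 2) : (t : ℕ) → Fin N → (Fin q → ZMod 2)
  | t, i =>
    if h : t < T then
      C.enc i ⟨t, h⟩ (sourceBlock 𝒰 v i)
        (fun s => ∑ i' : Fin N, (linkMat net i' (some i)).mulVec (transmitSrc net C v s i'))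
    else 0
termination_by t _ => t
decreasing_by exact s.isLt

/-- The signal received by node `j` at time `t` under the scheme. -/
noncomputable def receivedSrcAt {N q : ℕ} (net : LFFDNet N q) {n₀ : ℕ}
    {𝒰 : Fin N → Finset (Fin n₀)} {T : ℕ} (C : SourceScheme net 𝒰 T)
    (v : Fin T → Fin n₀ → ZMod 2) (j : Option (Fin N)) (t : ℕ) : Fin q → ZMod 2 :=
  ∑ i' : Fin N, (linkMat net i' j).mulVec (transmitSrc net C v t i')

/-- The probability that the destination fails to reproduce all the source blocks, the
source realization `v` being uniformly distributed (i.e., `V` consists of i.i.d. unbiased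
bits, i.i.d. in time). -/
noncomputable def PerrSrc {N q : ℕ} (net : LFFDNet N q) {n₀ : ℕ}
    {𝒰 : Fin N → Finset (Fin n₀)} {T : ℕ} (C : SourceScheme net 𝒰 T) : ℝ :=
  ((Finset.univ.filter fun v : Fin T → Fin n₀ → ZMod 2 =>
      C.dec (fun t => receivedSrcAt net C v none t) ≠ fun i => sourceBlock 𝒰 v i).card : ℝ) /
    (Fintype.card (Fin T → Fin n₀ → ZMod 2) : ℝ)

/-- The source is transmissible if there is a sequence of schemes whose block lengths tend
to infinity and whose error probabilities tend to `0`. -/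
def Transmissible {N q : ℕ} (net : LFFDNet N q) {n₀ : ℕ}
    (𝒰 : Fin N → Finset (Fin n₀)) : Prop :=
  ∃ (Tk : ℕ → ℕ) (Ck : (k : ℕ) → SourceScheme net 𝒰 (Tk k)),
    Tendsto Tk atTop atTop ∧ Tendsto (fun k => PerrSrc net (Ck k)) atTop (𝓝 0)


section Aux

open Finset

lemma card_filter_agree {n₀ : ℕ} (A : Finset (Fin n₀)) (v : Fin n₀ → ZMod 2) :
    (Finset.univ.filter fun w : Fin n₀ → ZMod 2 => ∀ ℓ ∈ A, w ℓ = v ℓ).card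
      = 2 ^ (n₀ - A.card) := by
  rw [← Fintype.card_subtype]
  have e : {w : Fin n₀ → ZMod 2 // ∀ ℓ ∈ A, w ℓ = v ℓ} ≃ ((↥(Aᶜ) : Type) → ZMod 2) := by
    refine
      { toFun := fun w ℓ => w.1 ℓ.1
        invFun := fun g => ⟨fun ℓ => if h : ℓ ∈ A then v ℓ else g ⟨ℓ, by simpa using h⟩,
          fun ℓ hℓ => by simp [hℓ]⟩
        left_inv := ?_
        right_inv := ?_ }
    · rintro ⟨w, hw⟩
      ext ℓ
      by_cases h : ℓ ∈ A
      · simp [h, hw ℓ h]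
      · simp [h]
    · intro g
      ext ℓ
      have : (ℓ : Fin n₀) ∉ A := Finset.mem_compl.mp ℓ.2
      simp [this]
  rw [Fintype.card_congr e]
  simp [Finset.card_compl]

lemma entropy_of_res {n₀ : ℕ} {α : Type*} [Fintype α] [DecidableEq α]
    (A : Finset (Fin n₀)) (X : (Fin n₀ → ZMod 2) → α)
    (hX : ∀ v w, X v = X w ↔ ∀ ℓ ∈ A, v ℓ = w ℓ) :
    entropyOfUniform X = A.card * Real.log 2 := by
  classical
  set M : ℕ := Fintype.card (Fin n₀ → ZMod 2) with hM
  have hMval : M = 2 ^ n₀ := by simp [hM]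
  have hA : A.card ≤ n₀ := by
    simpa using Finset.card_le_univ A
  set c : ℕ := 2 ^ (n₀ - A.card) with hc
  have hfib : ∀ v : Fin n₀ → ZMod 2,
      (Finset.univ.filter fun w => X w = X v).card = c := by
    intro v
    rw [hc, ← card_filter_agree A v]
    congr 1
    ext w
    simp [hX]
  set I : Finset α := Finset.univ.image X with hI
  have hsum : ∑ a ∈ I, (Finset.univ.filter fun w => X w = a).card = M := by
    rw [← Finset.card_eq_sum_card_fiberwise
      (t := I) (fun x _ => Finset.mem_image_of_mem X (Finset.mem_univ x)), Finset.card_univ]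
  have hIc : I.card * c = M := by
    rw [← hsum, Finset.sum_congr rfl (fun a ha => ?_), Finset.sum_const, smul_eq_mul]
    obtain ⟨v, _, rfl⟩ := Finset.mem_image.mp ha
    exact hfib v
  have hMpos : (0:ℝ) < M := by positivity
  have hcpos : (0:ℝ) < c := by positivity
  have key : entropyOfUniform X = I.card * Real.negMulLog ((c:ℝ)/M) := by
    rw [entropyOfUniform, ← Finset.sum_subset (Finset.subset_univ I)]
    · rw [Finset.sum_congr rfl fun a ha => ?_, Finset.sum_const, nsmul_eq_mul]
      obtain ⟨v, _, rfl⟩ := Finset.mem_image.mp ha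
      rw [hfib v]
    · intro a _ ha
      have : (Finset.univ.filter fun w => X w = a).card = 0 := by
        rw [Finset.card_eq_zero, Finset.filter_eq_empty_iff]
        intro v _
        exact fun h => ha (h ▸ Finset.mem_image_of_mem X (Finset.mem_univ v))
      simp [this]
  rw [key, Real.negMulLog]
  have hcM : (c:ℝ)/M = ((2:ℝ) ^ A.card)⁻¹ := by
    have hMc : (M:ℝ) = (c:ℝ) * 2 ^ A.card := by
      rw [hMval, hc]
      push_cast
      rw [← pow_add]
      congr 1
      omega
    rw [hMc]
    field_simp
  have hlog : Real.log ((c:ℝ)/M) = -(A.card * Real.log 2) := by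
    rw [hcM, Real.log_inv, Real.log_pow]
  have hIcR : (I.card : ℝ) * ((c:ℝ)/M) = 1 := by
    rw [mul_div_assoc']
    rw [div_eq_one_iff_eq (ne_of_gt hMpos)]
    exact_mod_cast hIc
  calc (I.card : ℝ) * (-((c:ℝ)/M) * Real.log ((c:ℝ)/M))
      = (I.card : ℝ) * (-((c:ℝ)/M) * -(A.card * Real.log 2)) := by rw [hlog]
    _ = ((I.card : ℝ) * ((c:ℝ)/M)) * (A.card * Real.log 2) := by ring
    _ = A.card * Real.log 2 := by rw [hIcR, one_mul]

lemma sourceTuple_eq_iff {n₀ N : ℕ} (𝒰 : Fin N → Finset (Fin n₀)) (S : Finset (Fin N))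
    (v w : Fin n₀ → ZMod 2) :
    sourceTuple 𝒰 S v = sourceTuple 𝒰 S w ↔ ∀ ℓ ∈ S.biUnion 𝒰, v ℓ = w ℓ := by
  constructor
  · intro h ℓ hℓ
    obtain ⟨i, hi, hℓi⟩ := Finset.mem_biUnion.mp hℓ
    exact congrFun (congrFun h ⟨i, hi⟩) ⟨ℓ, hℓi⟩
  · intro h
    funext i ℓ
    exact h ℓ.1 (Finset.mem_biUnion.mpr ⟨i.1, i.2, ℓ.2⟩)

lemma condEntropy_sourceTuple {n₀ N : ℕ} (𝒰 : Fin N → Finset (Fin n₀))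
    (S : Finset (Fin N)) :
    condEntropyOfUniform (sourceTuple 𝒰 S) (sourceTuple 𝒰 Sᶜ)
      = ((S.biUnion 𝒰 \ Sᶜ.biUnion 𝒰).card : ℝ) * Real.log 2 := by
  classical
  rw [condEntropyOfUniform,
    entropy_of_res (S.biUnion 𝒰 ∪ Sᶜ.biUnion 𝒰)
      (fun v => (sourceTuple 𝒰 S v, sourceTuple 𝒰 Sᶜ v)) (fun v w => by
        rw [Prod.mk.injEq, sourceTuple_eq_iff, sourceTuple_eq_iff]
        constructor
        · rintro ⟨h1, h2⟩ ℓ hℓ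
          rcases Finset.mem_union.mp hℓ with h | h
          · exact h1 ℓ h
          · exact h2 ℓ h
        · intro h
          exact ⟨fun ℓ hℓ => h ℓ (Finset.mem_union_left _ hℓ),
            fun ℓ hℓ => h ℓ (Finset.mem_union_right _ hℓ)⟩),
    entropy_of_res (Sᶜ.biUnion 𝒰) (sourceTuple 𝒰 Sᶜ) (sourceTuple_eq_iff 𝒰 Sᶜ)]
  rw [← Finset.card_sdiff_add_card]
  push_cast
  ring

lemma cutMatrix_mulVec {N q : ℕ} (net : LFFDNet N q) (S : Finset (Fin N))
    (x : Fin N → Fin q → ZMod 2) (j : Option (Fin N)) (hj : j ∈ ((S.image some)ᶜ : Finset _))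
    (r : Fin q) :
    (cutMatrix net S).mulVec (fun ic => x ic.1.1 ic.2) (⟨j, hj⟩, r)
      = ∑ i ∈ S, (linkMat net i j).mulVec (x i) r := by
  rw [← Finset.sum_coe_sort S (fun i => (linkMat net i j).mulVec (x i) r)]
  simp only [Matrix.mulVec, dotProduct, cutMatrix, Matrix.of_apply,
    Fintype.sum_prod_type]

lemma sum_split {N q : ℕ} (net : LFFDNet N q) (S : Finset (Fin N))
    (x : Fin N → Fin q → ZMod 2) (j : Option (Fin N)) (hj : j ∈ ((S.image some)ᶜ : Finset _))
    (r : Fin q) :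
    (∑ i : Fin N, (linkMat net i j).mulVec (x i)) r
      = (cutMatrix net S).mulVec (fun ic => x ic.1.1 ic.2) (⟨j, hj⟩, r)
        + ∑ i ∈ Sᶜ, (linkMat net i j).mulVec (x i) r := by
  rw [cutMatrix_mulVec net S x j hj r, Finset.sum_apply,
    ← Finset.sum_add_sum_compl S (fun i => (linkMat net i j).mulVec (x i) r)]

lemma transmit_zero {N q : ℕ} (net : LFFDNet N q) {n₀ : ℕ}
    {𝒰 : Fin N → Finset (Fin n₀)} {T : ℕ} (C : SourceScheme net 𝒰 T)
    (v : Fin T → Fin n₀ → ZMod 2) {t : ℕ} (ht : ¬ t < T) (i : Fin N) :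
    transmitSrc net C v t i = 0 := by
  rw [transmitSrc]
  exact dif_neg ht

lemma transmit_agree {N q : ℕ} (net : LFFDNet N q) {n₀ : ℕ}
    {𝒰 : Fin N → Finset (Fin n₀)} {T : ℕ} (C : SourceScheme net 𝒰 T)
    (S : Finset (Fin N)) (v w : Fin T → Fin n₀ → ZMod 2)
    (hvw : ∀ (t : Fin T) ℓ, ℓ ∉ (S.biUnion 𝒰 \ Sᶜ.biUnion 𝒰) → v t ℓ = w t ℓ)
    (hZ : ∀ t : ℕ, (cutMatrix net S).mulVec (fun ic => transmitSrc net C v t ic.1.1 ic.2)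
        = (cutMatrix net S).mulVec (fun ic => transmitSrc net C w t ic.1.1 ic.2)) :
    ∀ t : ℕ, ∀ i : Fin N, i ∉ S → transmitSrc net C v t i = transmitSrc net C w t i := by
  intro t
  induction t using Nat.strong_induction_on with
  | _ t IH =>
    intro i hi
    rw [transmitSrc, transmitSrc]
    by_cases h : t < T
    · rw [dif_pos h, dif_pos h]
      have hsb : sourceBlock 𝒰 v i = sourceBlock 𝒰 w i := by
        funext t' ℓ
        apply hvw
        intro hmem
        exact (Finset.mem_sdiff.mp hmem).2
          (Finset.mem_biUnion.mpr ⟨i, Finset.mem_compl.mpr hi, ℓ.2⟩)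
      have hj : (some i) ∈ ((S.image some)ᶜ : Finset (Option (Fin N))) := by
        rw [Finset.mem_compl, Finset.mem_image]
        rintro ⟨x, hx, hxi⟩
        exact hi ((Option.some_injective _ hxi) ▸ hx)
      have hrec : (fun s : Fin t =>
            ∑ i' : Fin N, (linkMat net i' (some i)).mulVec (transmitSrc net C v s i'))
          = fun s : Fin t =>
            ∑ i' : Fin N, (linkMat net i' (some i)).mulVec (transmitSrc net C w s i') := by
        funext s
        funext r
        rw [sum_split net S _ _ hj r, sum_split net S _ _ hj r, hZ s]
        congr 1
        refine Finset.sum_congr rfl fun i' hi' => ?_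
        rw [IH s s.isLt i' (Finset.mem_compl.mp hi')]
      rw [hsb, hrec]
    · rw [dif_neg h, dif_neg h]

lemma received_agree {N q : ℕ} (net : LFFDNet N q) {n₀ : ℕ}
    {𝒰 : Fin N → Finset (Fin n₀)} {T : ℕ} (C : SourceScheme net 𝒰 T)
    (S : Finset (Fin N)) (v w : Fin T → Fin n₀ → ZMod 2)
    (hvw : ∀ (t : Fin T) ℓ, ℓ ∉ (S.biUnion 𝒰 \ Sᶜ.biUnion 𝒰) → v t ℓ = w t ℓ)
    (hZ : ∀ t : ℕ, (cutMatrix net S).mulVec (fun ic => transmitSrc net C v t ic.1.1 ic.2)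
        = (cutMatrix net S).mulVec (fun ic => transmitSrc net C w t ic.1.1 ic.2))
    (t : ℕ) :
    receivedSrcAt net C v none t = receivedSrcAt net C w none t := by
  have hj : (none : Option (Fin N)) ∈ ((S.image some)ᶜ : Finset (Option (Fin N))) := by
    rw [Finset.mem_compl, Finset.mem_image]
    rintro ⟨x, _, hx⟩
    exact Option.some_ne_none x hx
  funext r
  rw [receivedSrcAt, receivedSrcAt, sum_split net S _ _ hj r, sum_split net S _ _ hj r, hZ t]
  congr 1
  refine Finset.sum_congr rfl fun i' hi' => ?_
  rw [transmit_agree net C S v w hvw hZ t i' (Finset.mem_compl.mp hi')]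

lemma card_image_mulVec {m n : Type*} [Fintype m] [Fintype n] [DecidableEq m] [DecidableEq n]
    (M : Matrix m n (ZMod 2)) :
    (Finset.univ.image M.mulVec).card = 2 ^ M.rank := by
  classical
  have h1 : (Finset.univ.image M.mulVec : Finset (m → ZMod 2)) = (Set.range M.mulVec).toFinset := by
    rw [Set.toFinset_range]
  have h2 : Set.range M.mulVec = (LinearMap.range M.mulVecLin : Set (m → ZMod 2)) := by
    rw [LinearMap.coe_range]
    rfl
  rw [h1, Set.toFinset_card, ← Nat.card_eq_fintype_card, h2]
  haveI : Fintype ↥(LinearMap.range M.mulVecLin) := Fintype.ofFinite _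
  rw [Nat.card_eq_fintype_card]
  rw [Matrix.rank]
  exact Module.card_eq_pow_finrank (K := ZMod 2)

end Aux


lemma good_card_le {N q : ℕ} (net : LFFDNet N q) {n₀ : ℕ}
    {𝒰 : Fin N → Finset (Fin n₀)} {T : ℕ} (C : SourceScheme net 𝒰 T)
    (S : Finset (Fin N)) :
    (Finset.univ.filter fun v : Fin T → Fin n₀ → ZMod 2 =>
        C.dec (fun t => receivedSrcAt net C v none t) = fun i => sourceBlock 𝒰 v i).card
      ≤ 2 ^ ((n₀ - (S.biUnion 𝒰 \ Sᶜ.biUnion 𝒰).card) * T)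
          * (2 ^ (cutMatrix net S).rank) ^ T := by
  classical
  set D : Finset (Fin n₀) := S.biUnion 𝒰 \ Sᶜ.biUnion 𝒰 with hD
  set R : Finset ((↥((S.image some)ᶜ) × Fin q) → ZMod 2) :=
    Finset.univ.image (cutMatrix net S).mulVec with hR
  set Good : Finset (Fin T → Fin n₀ → ZMod 2) :=
    Finset.univ.filter fun v =>
      C.dec (fun t => receivedSrcAt net C v none t) = fun i => sourceBlock 𝒰 v i with hGood
  set Φ : (Fin T → Fin n₀ → ZMod 2) →
      (Fin T → (↥(Dᶜ) → ZMod 2)) × (Fin T → ↥R) := fun v =>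
    (fun t ℓ => v t ℓ.1,
     fun t => ⟨(cutMatrix net S).mulVec (fun ic => transmitSrc net C v t ic.1.1 ic.2),
       Finset.mem_image_of_mem _ (Finset.mem_univ _)⟩) with hΦ
  have hinj : Set.InjOn Φ ↑Good := by
    intro v hv w hw hΦvw
    have h1 := congrArg Prod.fst hΦvw
    have h2 := congrArg Prod.snd hΦvw
    simp only [hΦ] at h1 h2
    have hvw : ∀ (t : Fin T) ℓ, ℓ ∉ D → v t ℓ = w t ℓ := by
      intro t ℓ hℓ
      exact congrFun (congrFun h1 t) ⟨ℓ, Finset.mem_compl.mpr hℓ⟩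
    have hZ : ∀ t : ℕ,
        (cutMatrix net S).mulVec (fun ic => transmitSrc net C v t ic.1.1 ic.2)
          = (cutMatrix net S).mulVec (fun ic => transmitSrc net C w t ic.1.1 ic.2) := by
      intro t
      by_cases ht : t < T
      · exact Subtype.ext_iff.mp (congrFun h2 ⟨t, ht⟩)
      · have hv0 : (fun ic : ↥S × Fin q => transmitSrc net C v t ic.1.1 ic.2)
            = fun ic => transmitSrc net C w t ic.1.1 ic.2 := by
          funext ic
          rw [transmit_zero net C v ht, transmit_zero net C w ht]
        rw [hv0]
    have hrec := received_agree net C S v w hvw hZ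
    have hvG : C.dec (fun t => receivedSrcAt net C v none t) = fun i => sourceBlock 𝒰 v i :=
      (Finset.mem_filter.mp hv).2
    have hwG : C.dec (fun t => receivedSrcAt net C w none t) = fun i => sourceBlock 𝒰 w i :=
      (Finset.mem_filter.mp hw).2
    have harg : (fun t : Fin T => receivedSrcAt net C v none t)
        = fun t : Fin T => receivedSrcAt net C w none t := funext fun t => hrec t
    have hsb : (fun i => sourceBlock 𝒰 v i) = fun i => sourceBlock 𝒰 w i := by
      rw [← hvG, ← hwG, harg]
    funext t ℓ
    by_cases hℓ : ℓ ∈ D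
    · obtain ⟨i, hi, hℓi⟩ := Finset.mem_biUnion.mp (Finset.mem_sdiff.mp hℓ).1
      exact congrFun (congrFun (congrFun hsb i) t) ⟨ℓ, hℓi⟩
    · exact hvw t ℓ hℓ
  have hcard : Good.card ≤ Fintype.card ((Fin T → (↥(Dᶜ) → ZMod 2)) × (Fin T → ↥R)) := by
    rw [← Finset.card_univ]
    exact Finset.card_le_card_of_injOn Φ (fun a _ => Finset.mem_univ _) hinj
  refine hcard.trans ?_
  have hDc : Fintype.card ↥(Dᶜ) = n₀ - D.card := by
    simp [Finset.card_compl]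
  have hRc : Fintype.card ↥R = 2 ^ (cutMatrix net S).rank := by
    rw [Fintype.card_coe]
    exact card_image_mulVec _
  rw [Fintype.card_prod, Fintype.card_fun, Fintype.card_fun, Fintype.card_fun,
    hDc, hRc, pow_mul]
  simp [Fintype.card_fin]

/-- **Necessity part of Theorem 2**: if the common-bits source is transmissible, then
`H(U_S | U_{Sᶜ}) ≤ rank G_{S,Sᶜ}` (entropy in bits) for every `S ⊆ {1,…,N}`. -/
theorem condEntropy_le_cutset_rank_of_transmissible {N q : ℕ} (net : LFFDNet N q)
    {n₀ : ℕ} (𝒰 : Fin N → Finset (Fin n₀)) (h : Transmissible net 𝒰) :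
    ∀ S : Finset (Fin N),
      condEntropyOfUniform (sourceTuple 𝒰 S) (sourceTuple 𝒰 Sᶜ) ≤
        ((cutMatrix net S).rank : ℝ) * Real.log 2 := by
  classical
  intro S
  rw [condEntropy_sourceTuple]
  set D : Finset (Fin n₀) := S.biUnion 𝒰 \ Sᶜ.biUnion 𝒰 with hD
  set r : ℕ := (cutMatrix net S).rank with hr
  have hmr : D.card ≤ r := by
    by_contra hlt
    push_neg at hlt
    obtain ⟨Tk, Ck, hT, hP⟩ := h
    have h1 : ∀ᶠ k in atTop, 2 ≤ Tk k := hT.eventually_ge_atTop 2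
    have h2 : ∀ᶠ k in atTop, PerrSrc net (Ck k) < 1/2 :=
      hP.eventually (gt_mem_nhds (by norm_num))
    obtain ⟨k, hk2, hkP⟩ := (h1.and h2).exists
    set T := Tk k with hTk
    set C := Ck k with hCk
    have hmn : D.card ≤ n₀ := by simpa using Finset.card_le_univ D
    have hm1 : 1 ≤ D.card := by omega
    have hn1 : 1 ≤ n₀ := le_trans hm1 hmn
    have hcardfun : Fintype.card (Fin T → Fin n₀ → ZMod 2) = 2 ^ (n₀ * T) := by
      rw [Fintype.card_fun, Fintype.card_fun, ← pow_mul]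
      simp
    set G : ℕ := (Finset.univ.filter fun v : Fin T → Fin n₀ → ZMod 2 =>
        C.dec (fun t => receivedSrcAt net C v none t) = fun i => sourceBlock 𝒰 v i).card
      with hG
    set B : ℕ := (Finset.univ.filter fun v : Fin T → Fin n₀ → ZMod 2 =>
        C.dec (fun t => receivedSrcAt net C v none t) ≠ fun i => sourceBlock 𝒰 v i).card
      with hB
    have htot : G + B = 2 ^ (n₀ * T) := by
      rw [hG, hB, ← hcardfun, ← Finset.card_univ]
      have := Finset.card_filter_add_card_filter_not
        (s := (Finset.univ : Finset (Fin T → Fin n₀ → ZMod 2)))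
        (p := fun v => C.dec (fun t => receivedSrcAt net C v none t) = fun i => sourceBlock 𝒰 v i)
      convert this using 3
    -- upper bound on G
    have hboundG : G ≤ 2 ^ ((n₀ - D.card) * T) * (2 ^ r) ^ T := by
      rw [hG]
      exact good_card_le net C S
    have hGx : 4 * G ≤ 2 ^ (n₀ * T) := by
      have hTx : T ≤ n₀ * T := Nat.le_mul_of_pos_left T hn1
      have hexp : (n₀ - D.card) * T + r * T ≤ n₀ * T - 2 := by
        have h3 : (n₀ - D.card) + r ≤ n₀ - 1 := by omega
        calc (n₀ - D.card) * T + r * T = ((n₀ - D.card) + r) * T := (add_mul _ _ _).symm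
          _ ≤ (n₀ - 1) * T := Nat.mul_le_mul_right T h3
          _ = n₀ * T - T := by rw [Nat.sub_mul, one_mul]
          _ ≤ n₀ * T - 2 := by omega
      have h2x : 2 ≤ n₀ * T := le_trans hk2 hTx
      have hG2 : G ≤ 2 ^ (n₀ * T - 2) := by
        refine le_trans ?_ (Nat.pow_le_pow_right (by norm_num) hexp)
        rw [pow_add, pow_mul 2 r T]
        exact hboundG
      calc 4 * G ≤ 4 * 2 ^ (n₀ * T - 2) := Nat.mul_le_mul_left 4 hG2
        _ = 2 ^ (2 + (n₀ * T - 2)) := by rw [pow_add]; norm_num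
        _ = 2 ^ (n₀ * T) := by congr 1; omega
    -- lower bound on G from small error probability
    have hBx : 2 * B < 2 ^ (n₀ * T) := by
      rw [PerrSrc, ← hB, hcardfun] at hkP
      have hpos : (0:ℝ) < (2 ^ (n₀ * T) : ℕ) := by positivity
      rw [div_lt_iff₀ hpos] at hkP
      have : (2 * B : ℝ) < (2 ^ (n₀ * T) : ℕ) := by
        push_cast at hkP ⊢
        nlinarith [hkP]
      exact_mod_cast this
    omega
  have : (D.card : ℝ) ≤ (r : ℝ) := by exact_mod_cast hmr
  exact mul_le_mul_of_nonneg_right this (Real.log_nonneg one_le_two)
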